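/- Consider a sequential L-layer network X⁰ = X, Xˡ = aₗ(Xˡ⁻¹ Wˡ + bˡ) with weight matrices Wˡ, biases bˡ (added row-wise), and element-wise activations aₗ each with Lipschitz constant Aₗ. Let Ŵˡ be perturbed weights, X̂ˡ the correspondingly perturbed activations (X̂⁰ = X), and define εₗ = ‖Xˡ⁻¹ Wˡ − Xˡ⁻¹ Ŵˡ‖_F. Then ‖X^L − X̂^L‖_F ≤ Σ_{l=1}^L [ Aₗ εₗ · Π_{i=l+1}^L ‖Ŵⁱ‖₂ Aᵢ ], where ‖·‖₂ is the spectral norm and the empty product equals 1. -/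

import Mathlib

/-!
The error of layer `l + 1` splits as `X W - X̂ Ŵ = (X W - X Ŵ) + (X - X̂) Ŵ`: the bias cancels,
the activation scales Frobenius distances by at most `A`, and right multiplication by `Ŵ` scales
the Frobenius norm by at most `‖Ŵ‖₂` because it acts row by row. The errors therefore satisfy
`e (l + 1) ≤ A ε + ‖Ŵ‖₂ A e l` with `e 0 = 0`, and unrolling this discrete Grönwall inequality
gives the sum.
-/

open Matrix

/-- Frobenius norm of a matrix. -/
noncomputable def frobNorm {m n : Type*} [Fintype m] [Fintype n] (A : Matrix m n ℝ) : ℝ :=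
  Real.sqrt (∑ i, ∑ j, (A i j) ^ 2)

/-- Spectral (operator 2-) norm of a matrix: the operator norm of the induced linear map
between Euclidean spaces. -/
noncomputable def specNorm {m n : ℕ} (A : Matrix (Fin m) (Fin n) ℝ) : ℝ :=
  ‖LinearMap.toContinuousLinearMap (Matrix.toEuclideanLin (𝕜 := ℝ) A)‖

theorem le_sum_mul_prod_Ico_of_le_add_mul {R : Type*} [CommSemiring R] [PartialOrder R]
    [IsOrderedRing R] {e c r : ℕ → R} (hr : ∀ l, 0 ≤ r l) (h0 : e 0 ≤ 0)
    (hstep : ∀ l, e (l + 1) ≤ c l + e l * r l) (L : ℕ) :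
    e L ≤ ∑ l ∈ Finset.range L, c l * ∏ i ∈ Finset.Ico (l + 1) L, r i := by
  induction L with
  | zero => simpa using h0
  | succ L ih =>
    calc e (L + 1) ≤ c L + e L * r L := hstep L
      _ ≤ c L + (∑ l ∈ Finset.range L, c l * ∏ i ∈ Finset.Ico (l + 1) L, r i) * r L := by
        gcongr; exact hr L
      _ = _ := by
        rw [Finset.sum_range_succ, Finset.Ico_self, Finset.prod_empty, mul_one, add_comm,
          Finset.sum_mul]
        congr 1
        refine Finset.sum_congr rfl fun l hl => ?_
        rw [Finset.prod_Ico_succ_top (Finset.mem_range.mp hl), mul_assoc]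

section Frobenius

variable {m n : Type*} [Fintype m] [Fintype n]

open scoped Matrix.Norms.Frobenius in
theorem frobNorm_eq_frobenius_norm (M : Matrix m n ℝ) : frobNorm M = ‖M‖ := by
  simp [frobNorm, frobenius_norm_def, Real.sqrt_eq_rpow]

theorem frobNorm_nonneg (M : Matrix m n ℝ) : 0 ≤ frobNorm M := Real.sqrt_nonneg _

theorem frobNorm_add_le (M N : Matrix m n ℝ) : frobNorm (M + N) ≤ frobNorm M + frobNorm N := by
  open scoped Matrix.Norms.Frobenius in
  simpa only [frobNorm_eq_frobenius_norm] using norm_add_le M N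

theorem frobNorm_sq_eq_sum_norm_row_sq (M : Matrix m n ℝ) :
    frobNorm M ^ 2 = ∑ i, ‖WithLp.toLp 2 (M i)‖ ^ 2 := by
  rw [frobNorm, Real.sq_sqrt (by positivity)]
  simp [EuclideanSpace.norm_sq_eq]

theorem frobNorm_le_mul_of_abs_le {M N : Matrix m n ℝ} {c : ℝ} (hc : 0 ≤ c)
    (h : ∀ i j, |M i j| ≤ c * |N i j|) : frobNorm M ≤ c * frobNorm N := by
  rw [frobNorm, frobNorm, ← Real.sqrt_sq hc, ← Real.sqrt_mul (sq_nonneg c), Finset.mul_sum]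
  refine Real.sqrt_le_sqrt (Finset.sum_le_sum fun i _ => ?_)
  rw [Finset.mul_sum]
  refine Finset.sum_le_sum fun j _ => ?_
  rw [← sq_abs, ← sq_abs (N i j), ← mul_pow]
  exact pow_le_pow_left₀ (abs_nonneg _) (h i j) 2

theorem frobNorm_map_sub_map_le {f : ℝ → ℝ} {c : ℝ} (hc : 0 ≤ c)
    (hf : ∀ x y, |f x - f y| ≤ c * |x - y|) (M N : Matrix m n ℝ) :
    frobNorm (M.map f - N.map f) ≤ c * frobNorm (M - N) :=
  frobNorm_le_mul_of_abs_le hc fun i j => hf (M i j) (N i j)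

end Frobenius

theorem specNorm_nonneg {m n : ℕ} (P : Matrix (Fin m) (Fin n) ℝ) : 0 ≤ specNorm P :=
  norm_nonneg _

open scoped Matrix.Norms.L2Operator in
theorem frobNorm_mul_le {ι : Type*} [Fintype ι] {m n : ℕ} (M : Matrix ι (Fin m) ℝ)
    (P : Matrix (Fin m) (Fin n) ℝ) : frobNorm (M * P) ≤ frobNorm M * specNorm P := by
  have hP : ‖Pᵀ‖ = specNorm P := by
    rw [← conjTranspose_eq_transpose_of_trivial, l2_opNorm_conjTranspose]; rfl
  have hrow (i : ι) : ‖WithLp.toLp 2 ((M * P) i)‖ ≤ specNorm P * ‖WithLp.toLp 2 (M i)‖ := by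
    have hMP : (M * P) i = Pᵀ *ᵥ M i := by ext j; rw [mulVec_transpose, mul_apply_eq_vecMul]
    rw [hMP, ← hP]
    exact l2_opNorm_mulVec Pᵀ (WithLp.toLp 2 (M i))
  refine le_of_pow_le_pow_left₀ two_ne_zero
    (mul_nonneg (frobNorm_nonneg M) (specNorm_nonneg P)) ?_
  rw [mul_pow, frobNorm_sq_eq_sum_norm_row_sq, frobNorm_sq_eq_sum_norm_row_sq, Finset.sum_mul]
  refine Finset.sum_le_sum fun i _ => ?_
  rw [mul_comm, ← mul_pow]
  exact pow_le_pow_left₀ (norm_nonneg _) (hrow i) 2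

theorem frobNorm_map_mul_add_sub_map_mul_add_le {ι : Type*} [Fintype ι] {m n : ℕ}
    {f : ℝ → ℝ} {c : ℝ} (hc : 0 ≤ c) (hf : ∀ x y, |f x - f y| ≤ c * |x - y|)
    (X Xh : Matrix ι (Fin m) ℝ) (W Wh : Matrix (Fin m) (Fin n) ℝ) (β : Matrix ι (Fin n) ℝ) :
    frobNorm ((X * W + β).map f - (Xh * Wh + β).map f) ≤
      c * frobNorm (X * W - X * Wh) + frobNorm (X - Xh) * (specNorm Wh * c) := by
  have hsplit : X * W - Xh * Wh = (X * W - X * Wh) + (X - Xh) * Wh := by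
    rw [Matrix.sub_mul]; abel
  calc _ ≤ c * frobNorm (X * W - Xh * Wh) := by
        simpa only [add_sub_add_right_eq_sub] using
          frobNorm_map_sub_map_le hc hf (X * W + β) (Xh * Wh + β)
    _ ≤ c * (frobNorm (X * W - X * Wh) + frobNorm (X - Xh) * specNorm Wh) := by
        refine mul_le_mul_of_nonneg_left ?_ hc
        rw [hsplit]
        exact (frobNorm_add_le _ _).trans (add_le_add_right (frobNorm_mul_le _ _) _)
    _ = _ := by ring

/-- Layer `l + 1` of the informal statement is index `l` here. -/
theorem network_output_distortion_bound
    (L B : ℕ) (D : ℕ → ℕ)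
    (W Wh : (l : ℕ) → Matrix (Fin (D l)) (Fin (D (l + 1))) ℝ)
    (b : (l : ℕ) → Fin (D (l + 1)) → ℝ)
    (a : ℕ → ℝ → ℝ) (A : ℕ → ℝ) (hA0 : ∀ l, 0 ≤ A l)
    (hLip : ∀ l x y, |a l x - a l y| ≤ A l * |x - y|)
    (X0 : Matrix (Fin B) (Fin (D 0)) ℝ)
    (Xs Xh : (l : ℕ) → Matrix (Fin B) (Fin (D l)) ℝ)
    (hX0 : Xs 0 = X0) (hXh0 : Xh 0 = X0)
    (hXs : ∀ l, Xs (l + 1) =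
      (Xs l * W l + Matrix.of fun (_ : Fin B) j => b l j).map (a l))
    (hXh : ∀ l, Xh (l + 1) =
      (Xh l * Wh l + Matrix.of fun (_ : Fin B) j => b l j).map (a l)) :
    frobNorm (Xs L - Xh L) ≤
      ∑ l ∈ Finset.range L,
        A l * frobNorm (Xs l * W l - Xs l * Wh l) *
          ∏ i ∈ Finset.Ico (l + 1) L, specNorm (Wh i) * A i := by
  refine le_sum_mul_prod_Ico_of_le_add_mul (e := fun l => frobNorm (Xs l - Xh l))
    (fun l => mul_nonneg (specNorm_nonneg _) (hA0 l)) ?_ (fun l => ?_) L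
  · simp [hX0, hXh0, frobNorm]
  · rw [hXs, hXh]
    exact frobNorm_map_mul_add_sub_map_mul_add_le (hA0 l) (hLip l) _ _ _ _ _
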